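/- Let k ≥ 3 and n be integers with n ≥ 12 and n ≥ 2k+1. Let F be a simple graph on n vertices, and suppose S ⊆ V(F) with 1 ≤ |S| ≤ k−2 is such that every connected component of F − S is factor-critical and |S| + Σ_{i=1}^{q} (d_i − 1)/2 = k − 1, where d_1 ≥ d_2 ≥ … ≥ d_q are the orders of the connected components of F − S. If e(F) ≥ 2 + max{ C(2k−3,2), C(k−2,2) + (n−k+2)(k−2) }, then at most one connected component of F − S has more than one vertex (i.e., d_2 = 1). -/

import Mathlib

/-!
Suppose two components of `F - S` are nontrivial. Write `s = |S|` and `dᵢ = 2mᵢ + 1` for the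
(odd) component orders, so that `s + T = k - 1` with `T = ∑ mᵢ ≥ 2`. A vertex of `S` has degree
at most `n - 1`, and a vertex of a component of order `d` has all its neighbours in `S` or in
that component, hence degree at most `s + d - 1`. Summing degrees gives
`2 e(F) ≤ s (n - 1) + s (n - s) + 4 ∑ mᵢ² + 2 T`, and `∑ mᵢ² ≤ (T - 1)² + 1` since two of the
`mᵢ` are positive. This is less than twice the assumed lower bound on `e(F)`.
-/

/-- A graph `D` is factor-critical if for every vertex `v`, the graph `D - v` has a perfect
matching, i.e. `D` has a matching covering exactly the complement of `{v}`. -/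
def FactorCritical {W : Type*} (D : SimpleGraph W) : Prop :=
  ∀ v : W, ∃ M : D.Subgraph, M.IsMatching ∧ M.verts = {v}ᶜ

theorem FactorCritical.odd_card {W : Type*} [Finite W] [Nonempty W] {D : SimpleGraph W}
    (h : FactorCritical D) : Odd (Nat.card W) := by
  obtain ⟨v⟩ := ‹Nonempty W›
  obtain ⟨M, hM, hverts⟩ := h v
  have := Fintype.ofFinite M.verts
  have heven : Even ({v}ᶜ : Set W).ncard := by
    simpa [hverts, Set.ncard_eq_toFinset_card'] using hM.even_card
  rw [← Set.ncard_add_ncard_compl {v}, Set.ncard_singleton, add_comm]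
  exact heven.add_one

theorem FactorCritical.odd_ncard {V : Type*} [Finite V] {G : SimpleGraph V} {s : Set V}
    (h : FactorCritical (G.induce s)) (hs : s.Nonempty) : Odd s.ncard := by
  have := hs.to_subtype
  simpa using h.odd_card

theorem Nat.two_mul_choose_two (m : ℕ) : 2 * m.choose 2 = m * (m - 1) := by
  rw [Nat.choose_two_right, Nat.mul_div_cancel' (Nat.even_mul_pred_self m).two_dvd]

theorem Finset.sum_sq_le_sq_sum_sub_one_add_one {ι : Type*} [DecidableEq ι] {s : Finset ι}
    {f : ι → ℕ} {i j : ι} (hi : i ∈ s) (hj : j ∈ s) (hij : i ≠ j) (hfi : 1 ≤ f i)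
    (hfj : 1 ≤ f j) : ∑ x ∈ s, f x ^ 2 ≤ (∑ x ∈ s, f x - 1) ^ 2 + 1 := by
  rw [← Finset.add_sum_erase s _ hi, ← Finset.add_sum_erase s f hi]
  have hrest : 1 ≤ ∑ x ∈ s.erase i, f x :=
    hfj.trans (Finset.single_le_sum (by simp) (Finset.mem_erase.2 ⟨hij.symm, hj⟩))
  grw [Finset.sum_sq_le_sq_sum_of_nonneg fun _ _ => Nat.zero_le _]
  obtain ⟨a, ha⟩ := Nat.exists_eq_add_of_le' hfi
  obtain ⟨b, hb⟩ := Nat.exists_eq_add_of_le' hrest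
  rw [ha, hb, show a + 1 + (b + 1) - 1 = a + b + 1 by omega]
  nlinarith [Nat.zero_le (a * b)]

namespace SimpleGraph

variable {V : Type*} [Fintype V]

theorem ConnectedComponent.sum_comp_connectedComponentMk {G : SimpleGraph V}
    [Fintype G.ConnectedComponent] {M : Type*} [AddCommMonoid M] (f : G.ConnectedComponent → M) :
    ∑ v, f (G.connectedComponentMk v) = ∑ K, K.supp.ncard • f K := by
  classical
  rw [← Finset.sum_fiberwise Finset.univ G.connectedComponentMk]
  refine Finset.sum_congr rfl fun K _ => ?_
  rw [Finset.sum_congr rfl fun v hv => congrArg f (Finset.mem_filter.mp hv).2, Finset.sum_const,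
    Set.ncard_eq_toFinset_card']
  congr 2
  ext v
  simp [ConnectedComponent.mem_supp_iff]

theorem ConnectedComponent.sum_ncard_supp {G : SimpleGraph V} [Fintype G.ConnectedComponent] :
    ∑ K : G.ConnectedComponent, K.supp.ncard = Nat.card V := by
  have := sum_comp_connectedComponentMk (G := G) fun _ => 1
  simp only [smul_eq_mul, mul_one, Finset.sum_const, Finset.card_univ] at this
  rw [← this, Nat.card_eq_fintype_card]

theorem degree_lt_ncard_add_ncard_supp (F : SimpleGraph V) [DecidableRel F.Adj] (S : Set V)
    (x : ↥Sᶜ) : F.degree x < S.ncard + ((F.induce Sᶜ).connectedComponentMk x).supp.ncard := by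
  set K := (F.induce Sᶜ).connectedComponentMk x
  have hsub : insert (x : V) (F.neighborSet x) ⊆ S ∪ Subtype.val '' K.supp := by
    rintro u (rfl | hu)
    · exact Or.inr ⟨x, rfl, rfl⟩
    · by_cases huS : u ∈ S
      · exact Or.inl huS
      · exact Or.inr ⟨⟨u, huS⟩, K.mem_supp_of_adj_mem_supp rfl hu, rfl⟩
  calc F.degree x < (insert (x : V) (F.neighborSet x)).ncard := by
        rw [Set.ncard_insert_of_notMem F.notMem_neighborSet_self, Set.ncard_eq_toFinset_card',
          Set.toFinset_card, F.card_neighborSet_eq_degree]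
        exact Nat.lt_add_one _
    _ ≤ (S ∪ Subtype.val '' K.supp).ncard := Set.ncard_le_ncard hsub
    _ ≤ S.ncard + (Subtype.val '' K.supp).ncard := Set.ncard_union_le _ _
    _ = S.ncard + K.supp.ncard := by rw [Set.ncard_image_of_injective _ Subtype.val_injective]

theorem two_mul_ncard_edgeSet_le (F : SimpleGraph V) [DecidableRel F.Adj] (S : Set V)
    [Fintype (F.induce Sᶜ).ConnectedComponent] :
    2 * F.edgeSet.ncard ≤ S.ncard * (Fintype.card V - 1) +
      ∑ K : (F.induce Sᶜ).ConnectedComponent, K.supp.ncard * (S.ncard + K.supp.ncard - 1) := by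
  classical
  rw [Set.ncard_eq_toFinset_card', ← edgeFinset, ← sum_degrees_eq_twice_card_edges,
    ← Finset.sum_add_sum_compl S.toFinset]
  gcongr
  · rw [Set.ncard_eq_toFinset_card', ← smul_eq_mul]
    exact Finset.sum_le_card_nsmul _ _ _ fun v _ =>
      Nat.le_sub_one_of_lt (F.degree_lt_card_verts v)
  · rw [Finset.sum_subtype _ (p := (· ∈ Sᶜ)) (fun v => by simp)]
    calc ∑ x : ↥Sᶜ, F.degree x
        ≤ ∑ x : ↥Sᶜ, (S.ncard + ((F.induce Sᶜ).connectedComponentMk x).supp.ncard - 1) :=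
          Finset.sum_le_sum fun x _ => Nat.le_sub_one_of_lt (F.degree_lt_ncard_add_ncard_supp S x)
      _ = _ := by
          rw [ConnectedComponent.sum_comp_connectedComponentMk
            (fun K => S.ncard + K.supp.ncard - 1)]
          simp only [smul_eq_mul]

theorem two_mul_ncard_edgeSet_le_of_odd (F : SimpleGraph V) [DecidableRel F.Adj] (S : Set V)
    [Fintype (F.induce Sᶜ).ConnectedComponent] (m : (F.induce Sᶜ).ConnectedComponent → ℕ)
    (hm : ∀ K, K.supp.ncard = 2 * m K + 1) :
    2 * F.edgeSet.ncard ≤ S.ncard * (Fintype.card V - 1) +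
      (S.ncard * (Fintype.card V - S.ncard) + 4 * ∑ K, m K ^ 2 + 2 * ∑ K, m K) := by
  classical
  have hcompl : ∑ K, (2 * m K + 1) = Fintype.card V - S.ncard := by
    simp only [← hm]
    rw [ConnectedComponent.sum_ncard_supp, Nat.card_coe_set_eq, Set.ncard_compl,
      Nat.card_eq_fintype_card]
  convert F.two_mul_ncard_edgeSet_le S using 2
  rw [← hcompl, Finset.mul_sum, Finset.mul_sum, Finset.mul_sum, ← Finset.sum_add_distrib,
    ← Finset.sum_add_distrib]
  refine Finset.sum_congr rfl fun K _ => ?_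
  rw [hm, ← Nat.add_assoc, Nat.add_sub_cancel]
  ring

end SimpleGraph

theorem degree_sum_bound_lt_two_mul_edge_threshold {s T Q n k : ℕ} (hs : 1 ≤ s) (hT : 2 ≤ T)
    (hk : s + T = k - 1) (hn : 2 * k + 1 ≤ n) (hQ : Q ≤ (T - 1) ^ 2 + 1) :
    s * (n - 1) + (s * (n - s) + 4 * Q + 2 * T) <
      2 * (2 + max ((2 * k - 3).choose 2) ((k - 2).choose 2 + (n - k + 2) * (k - 2))) := by
  rw [← max_add_add_left, mul_max_of_nonneg _ _ zero_le_two, lt_max_iff]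
  have h₁ := Nat.two_mul_choose_two (2 * k - 3)
  have h₂ := Nat.two_mul_choose_two (k - 2)
  zify [(by omega : 1 ≤ T), (by omega : 1 ≤ n), (by omega : s ≤ n), (by omega : 3 ≤ 2 * k),
    (by omega : 1 ≤ 2 * k - 3), (by omega : 2 ≤ k), (by omega : 1 ≤ k - 2), (by omega : k ≤ n),
    (by omega : 1 ≤ k)] at hk hn hQ h₁ h₂ ⊢
  -- With `c = n - 2k - 1` and `U` the left-hand side at `Q = (T - 1)² + 1`, the two alternatives
  -- exceed `U` by `s (s + 4T - 11 - 2c) - 2` and `(T - 1) (2s + 2c + 8 - T) - 2` respectively.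
  set c : ℤ := n - 2 * k - 1
  rcases le_or_gt (T : ℤ) (2 * s + 2 * c + 5) with hTc | hTc
  · right
    nlinarith [mul_nonneg (by linarith : (0 : ℤ) ≤ T - 1)
      (by linarith : 0 ≤ 2 * s + 2 * c + 5 - T)]
  · left
    nlinarith [mul_nonneg (by linarith : (0 : ℤ) ≤ s)
      (by linarith : 0 ≤ T - 2 * s - 2 * c - 6)]

theorem claim_d2_eq_one_middle_case_general
    {V : Type*} [Fintype V] (k n : ℕ) (hn : 2 * k + 1 ≤ n)
    (hV : Fintype.card V = n)
    (F : SimpleGraph V) (S : Set V) (hS1 : 1 ≤ S.ncard)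
    (hfc : ∀ K : (F.induce Sᶜ).ConnectedComponent,
      FactorCritical ((F.induce Sᶜ).induce K.supp))
    (hsum : S.ncard +
      ∑ᶠ K : (F.induce Sᶜ).ConnectedComponent, (K.supp.ncard - 1) / 2 = k - 1)
    (he : 2 + max ((2 * k - 3).choose 2) ((k - 2).choose 2 + (n - k + 2) * (k - 2))
      ≤ F.edgeSet.ncard) :
    {K : (F.induce Sᶜ).ConnectedComponent | 1 < K.supp.ncard}.Subsingleton := by
  classical
  intro K₁ hK₁ K₂ hK₂
  by_contra hne
  choose m hm using fun K => (hfc K).odd_ncard K.nonempty_supp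
  have hpos (K) (hK : 1 < K.supp.ncard) : 1 ≤ m K := by have := hm K; omega
  have hm₁ := hpos K₁ hK₁
  have hm₂ := hpos K₂ hK₂
  have hT : S.ncard + ∑ K, m K = k - 1 := by simpa [finsum_eq_sum_of_fintype, hm] using hsum
  have hT₂ : m K₁ + m K₂ ≤ ∑ K, m K := by
    rw [← Finset.sum_pair hne]
    exact Finset.sum_le_sum_of_subset (Finset.subset_univ _)
  have hsq := Finset.sum_sq_le_sq_sum_sub_one_add_one (Finset.mem_univ K₁) (Finset.mem_univ K₂)
    hne hm₁ hm₂
  have hedges := hV ▸ F.two_mul_ncard_edgeSet_le_of_odd S m hm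
  have hlt := degree_sum_bound_lt_two_mul_edge_threshold hS1 (by omega) hT hn hsq
  omega

/-- Claim 3.9: let `k ≥ 3`, `n ≥ 12`, `n ≥ 2k+1`, and let `F` be a graph on `n` vertices.
Suppose `S` is a set of vertices with `1 ≤ |S| ≤ k-2` such that every connected component of
`F - S` is factor-critical and `|S| + Σᵢ (dᵢ - 1)/2 = k - 1`, where the `dᵢ` are the orders
of the components of `F - S`. If `e(F) ≥ 2 + max{C(2k-3,2), C(k-2,2) + (n-k+2)(k-2)}`, then
at most one component of `F - S` has more than one vertex (i.e. `d₂ = 1`). -/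
theorem claim_d2_eq_one_middle_case
    {V : Type*} [Fintype V] (k n : ℕ) (hk : 3 ≤ k) (hn12 : 12 ≤ n) (hn : 2 * k + 1 ≤ n)
    (hV : Fintype.card V = n)
    (F : SimpleGraph V) (S : Set V) (hS1 : 1 ≤ S.ncard) (hS2 : S.ncard ≤ k - 2)
    (hfc : ∀ K : (F.induce Sᶜ).ConnectedComponent,
      FactorCritical ((F.induce Sᶜ).induce K.supp))
    (hsum : S.ncard +
      ∑ᶠ K : (F.induce Sᶜ).ConnectedComponent, (K.supp.ncard - 1) / 2 = k - 1)
    (he : 2 + max ((2 * k - 3).choose 2) ((k - 2).choose 2 + (n - k + 2) * (k - 2))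
      ≤ F.edgeSet.ncard) :
    {K : (F.induce Sᶜ).ConnectedComponent | 1 < K.supp.ncard}.Subsingleton :=
  claim_d2_eq_one_middle_case_general k n hn hV F S hS1 hfc hsum he
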